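/- arXiv:1510.04671 — 9 statements merged into one kernel-verified Lean document; each statement's English description precedes it below -/
import Mathlib

section
/- Let n be a positive integer, let S be a complex 2n×2n matrix written in n×n blocks as S = [[λ, μ], [ν, ρ]], and suppose S is complex symplectic, i.e. Sᵀ J S = J where J = [[0, I], [−I, 0]]. Let A be a complex symmetric n×n matrix (Aᵀ = A) such that λ + μA is invertible. Then the matrix A' = (ν + ρA)(λ + μA)⁻¹ is also symmetric, i.e. A'ᵀ = A'. -/
open Matrix

/-- If `S = [[λ, μ], [ν, ρ]]` is complex symplectic (`Sᵀ J S = J`) and `A` is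
complex symmetric with `λ + μA` invertible, then `A' = (ν + ρA)(λ + μA)⁻¹` is symmetric. -/
theorem symplectic_action_preserves_symmetric (n : ℕ) (hn : 0 < n)
    (lam mu nu rho A : Matrix (Fin n) (Fin n) ℂ)
    (hS : (fromBlocks lam mu nu rho)ᵀ *
        fromBlocks (0 : Matrix (Fin n) (Fin n) ℂ) (1 : Matrix (Fin n) (Fin n) ℂ)
          (-1 : Matrix (Fin n) (Fin n) ℂ) (0 : Matrix (Fin n) (Fin n) ℂ) *
        fromBlocks lam mu nu rho =
      fromBlocks (0 : Matrix (Fin n) (Fin n) ℂ) (1 : Matrix (Fin n) (Fin n) ℂ)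
        (-1 : Matrix (Fin n) (Fin n) ℂ) (0 : Matrix (Fin n) (Fin n) ℂ))
    (hA : Aᵀ = A) (hinv : IsUnit (lam + mu * A)) :
    ((nu + rho * A) * (lam + mu * A)⁻¹)ᵀ = (nu + rho * A) * (lam + mu * A)⁻¹ := by
  set B := lam + mu * A with hB
  set C := nu + rho * A with hC
  rw [fromBlocks_transpose] at hS
  rw [show (fromBlocks lamᵀ nuᵀ muᵀ rhoᵀ *
      fromBlocks (0 : Matrix (Fin n) (Fin n) ℂ) 1 (-1) 0 * fromBlocks lam mu nu rho)
      = fromBlocks (lamᵀ * nu - nuᵀ * lam) (lamᵀ * rho - nuᵀ * mu)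
          (muᵀ * nu - rhoᵀ * lam) (muᵀ * rho - rhoᵀ * mu) by
    simp [fromBlocks_multiply]
    congr 1 <;> noncomm_ring <;> exact ⟨trivial, trivial, trivial, trivial⟩] at hS
  have h11 : lamᵀ * nu - nuᵀ * lam = 0 := congrArg Matrix.toBlocks₁₁ hS
  have h12 : lamᵀ * rho - nuᵀ * mu = 1 := congrArg Matrix.toBlocks₁₂ hS
  have h21 : muᵀ * nu - rhoᵀ * lam = -1 := congrArg Matrix.toBlocks₂₁ hS
  have h22 : muᵀ * rho - rhoᵀ * mu = 0 := congrArg Matrix.toBlocks₂₂ hS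
  have key : Cᵀ * B = Bᵀ * C := by
    have : Bᵀ * C - Cᵀ * B = (lamᵀ * nu - nuᵀ * lam) + (lamᵀ * rho - nuᵀ * mu) * A
        + A * (muᵀ * nu - rhoᵀ * lam) + A * (muᵀ * rho - rhoᵀ * mu) * A := by
      simp only [hB, hC, transpose_add, transpose_mul, hA]
      noncomm_ring
    rw [h11, h12, h21, h22] at this
    simp at this
    linear_combination (norm := noncomm_ring) -this
  have hdet : IsUnit B.det := (Matrix.isUnit_iff_isUnit_det B).mp hinv
  have hdetT : IsUnit Bᵀ.det := by simpa using hdet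
  rw [transpose_mul, transpose_nonsing_inv]
  have : Cᵀ = Bᵀ * C * B⁻¹ := by
    rw [← key, Matrix.mul_assoc, Matrix.mul_nonsing_inv _ hdet, Matrix.mul_one]
  rw [this, ← Matrix.mul_assoc, ← Matrix.mul_assoc, Matrix.nonsing_inv_mul _ hdetT, Matrix.one_mul]
end

section
/- Let n be a positive integer and let S be a complex 2n×2n matrix of the block form S = [[λ, μ], [conj(μ), conj(λ)]] with λ, μ complex n×n matrices. Then Sᴴ K S = K, where K = [[I, 0], [0, −I]], if and only if both λλᴴ − μμᴴ = I and λμᵀ = μλᵀ hold. -/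
open Matrix

/-! Since `K² = 1`, the condition `Sᴴ K S = K` says that `K Sᴴ K` is a left inverse of `S`; in
finite dimension it is then a right inverse too, which turns the condition into `S K Sᴴ = K`.
The blocks of `S K Sᴴ` are `λλᴴ − μμᴴ` and `λμᵀ − μλᵀ` in the top row, and minus their entrywise
conjugates in the bottom row, so only the two top blocks impose conditions. -/

theorem mul_mul_eq_self_comm {M : Type*} [Monoid M] [IsDedekindFiniteMonoid M] {a b k : M}
    (hk : k * k = 1) : a * k * b = k ↔ b * k * a = k := by
  have key : ∀ {x y : M}, x * k * y = k → y * k * x = k := fun {x y} h => by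
    have hleft : (k * x * k) * y = 1 := by rw [mul_assoc, mul_assoc, ← mul_assoc x, h, hk]
    calc y * k * x = y * (k * x * k) * k := by simp only [mul_assoc, hk, mul_one]
      _ = k := by rw [mul_eq_one_comm.mp hleft, one_mul]
  exact ⟨key, key⟩

theorem fromBlocks_one_zero_zero_neg_one_mul_self {R : Type*} [Ring R] (m n : Type*)
    [Fintype m] [Fintype n] [DecidableEq m] [DecidableEq n] :
    fromBlocks (1 : Matrix m m R) 0 0 (-1 : Matrix n n R) * fromBlocks 1 0 0 (-1) = 1 := by
  simp [fromBlocks_multiply, ← fromBlocks_one]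

section

variable {R : Type*} [CommRing R] [StarRing R] {l m n o : Type*}

theorem conjTranspose_map_star (M : Matrix m n R) : (M.map (starRingEnd R))ᴴ = Mᵀ := by
  ext i j
  simp [starRingEnd_apply]

theorem map_star_conjTranspose (M : Matrix m n R) : Mᴴ.map (starRingEnd R) = Mᵀ := by
  ext i j
  simp [starRingEnd_apply]

theorem map_star_transpose (M : Matrix m n R) : Mᵀ.map (starRingEnd R) = Mᴴ := rfl

theorem fromBlocks_mul_fromBlocks_one_neg_one_mul_conjTranspose [Fintype m] [Fintype n]
    [DecidableEq m] [DecidableEq n] (A : Matrix l n R) (B : Matrix l m R)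
    (C : Matrix o n R) (D : Matrix o m R) :
    fromBlocks A B C D * fromBlocks (1 : Matrix n n R) 0 0 (-1 : Matrix m m R) *
        (fromBlocks A B C D)ᴴ =
      fromBlocks (A * Aᴴ - B * Bᴴ) (A * Cᴴ - B * Dᴴ) (C * Aᴴ - D * Bᴴ) (C * Cᴴ - D * Dᴴ) := by
  simp only [fromBlocks_conjTranspose, fromBlocks_multiply]
  simp [sub_eq_add_neg]

theorem fromBlocks_mul_fromBlocks_one_neg_one_mul_conjTranspose_of_map_star [Fintype m]
    [DecidableEq m] (lam mu : Matrix n m R) :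
    fromBlocks lam mu (mu.map (starRingEnd R)) (lam.map (starRingEnd R)) *
        fromBlocks (1 : Matrix m m R) 0 0 (-1 : Matrix m m R) *
        (fromBlocks lam mu (mu.map (starRingEnd R)) (lam.map (starRingEnd R)))ᴴ =
      fromBlocks (lam * lamᴴ - mu * muᴴ) (lam * muᵀ - mu * lamᵀ)
        (-(lam * muᵀ - mu * lamᵀ).map (starRingEnd R))
        (-(lam * lamᴴ - mu * muᴴ).map (starRingEnd R)) := by
  have hsub (P Q : Matrix n n R) := Matrix.map_sub _ (map_sub (starRingEnd R)) P Q
  rw [fromBlocks_mul_fromBlocks_one_neg_one_mul_conjTranspose, hsub, hsub, Matrix.map_mul,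
    Matrix.map_mul, Matrix.map_mul, Matrix.map_mul, conjTranspose_map_star,
    conjTranspose_map_star, map_star_conjTranspose, map_star_conjTranspose, map_star_transpose,
    map_star_transpose, neg_sub, neg_sub]

theorem fromBlocks_neg_map_star_eq_fromBlocks_one_neg_one_iff [DecidableEq n]
    (P Q : Matrix n n R) :
    fromBlocks P Q (-Q.map (starRingEnd R)) (-P.map (starRingEnd R)) =
        fromBlocks (1 : Matrix n n R) 0 0 (-1) ↔ P = 1 ∧ Q = 0 := by
  rw [fromBlocks_inj]
  constructor
  · rintro ⟨hP, hQ, -, -⟩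
    exact ⟨hP, hQ⟩
  · rintro ⟨rfl, rfl⟩
    simp

end

theorem pseudoUnitary_iff_block_conditions_general (n : ℕ)
    (lam mu : Matrix (Fin n) (Fin n) ℂ) :
    ((fromBlocks lam mu (mu.map (starRingEnd ℂ)) (lam.map (starRingEnd ℂ)))ᴴ *
        fromBlocks (1 : Matrix (Fin n) (Fin n) ℂ) (0 : Matrix (Fin n) (Fin n) ℂ)
          (0 : Matrix (Fin n) (Fin n) ℂ) (-1 : Matrix (Fin n) (Fin n) ℂ) *
        fromBlocks lam mu (mu.map (starRingEnd ℂ)) (lam.map (starRingEnd ℂ)) =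
      fromBlocks (1 : Matrix (Fin n) (Fin n) ℂ) (0 : Matrix (Fin n) (Fin n) ℂ)
        (0 : Matrix (Fin n) (Fin n) ℂ) (-1 : Matrix (Fin n) (Fin n) ℂ)) ↔
    (lam * lamᴴ - mu * muᴴ = 1 ∧ lam * muᵀ = mu * lamᵀ) := by
  rw [mul_mul_eq_self_comm (fromBlocks_one_zero_zero_neg_one_mul_self _ _),
    fromBlocks_mul_fromBlocks_one_neg_one_mul_conjTranspose_of_map_star,
    fromBlocks_neg_map_star_eq_fromBlocks_one_neg_one_iff, sub_eq_zero]

/-- For `S = [[λ, μ], [conj μ, conj λ]]`, one has `Sᴴ K S = K`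
(with `K = [[I, 0], [0, −I]]`) iff `λλᴴ − μμᴴ = I` and `λμᵀ = μλᵀ`. -/
theorem pseudoUnitary_iff_block_conditions (n : ℕ) (hn : 0 < n)
    (lam mu : Matrix (Fin n) (Fin n) ℂ) :
    ((fromBlocks lam mu (mu.map (starRingEnd ℂ)) (lam.map (starRingEnd ℂ)))ᴴ *
        fromBlocks (1 : Matrix (Fin n) (Fin n) ℂ) (0 : Matrix (Fin n) (Fin n) ℂ)
          (0 : Matrix (Fin n) (Fin n) ℂ) (-1 : Matrix (Fin n) (Fin n) ℂ) *
        fromBlocks lam mu (mu.map (starRingEnd ℂ)) (lam.map (starRingEnd ℂ)) =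
      fromBlocks (1 : Matrix (Fin n) (Fin n) ℂ) (0 : Matrix (Fin n) (Fin n) ℂ)
        (0 : Matrix (Fin n) (Fin n) ℂ) (-1 : Matrix (Fin n) (Fin n) ℂ)) ↔
    (lam * lamᴴ - mu * muᴴ = 1 ∧ lam * muᵀ = mu * lamᵀ) :=
  pseudoUnitary_iff_block_conditions_general n lam mu
end

section
/- Let λ, μ be complex n×n matrices. Then the pair of conditions (λλᴴ − μμᴴ = I and λμᵀ = μλᵀ) holds if and only if the pair of conditions (λᴴλ − μᵀconj(μ) = I and λᵀconj(μ) = μᴴλ) holds. -/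
open Matrix

/-- `(λλᴴ − μμᴴ = I ∧ λμᵀ = μλᵀ)` iff
`(λᴴλ − μᵀ conj(μ) = I ∧ λᵀ conj(μ) = μᴴλ)`. -/
theorem block_conditions_equiv (n : ℕ) (lam mu : Matrix (Fin n) (Fin n) ℂ) :
    (lam * lamᴴ - mu * muᴴ = 1 ∧ lam * muᵀ = mu * lamᵀ) ↔
    (lamᴴ * lam - muᵀ * mu.map (starRingEnd ℂ) = 1 ∧
      lamᵀ * mu.map (starRingEnd ℂ) = muᴴ * lam) := by
  set c := starRingEnd ℂ with hc
  have hmul : ∀ A B : Matrix (Fin n) (Fin n) ℂ, (A * B).map c = A.map c * B.map c :=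
    fun A B => Matrix.map_mul
  have hsub : ∀ A B : Matrix (Fin n) (Fin n) ℂ, (A - B).map c = A.map c - B.map c :=
    fun A B => Matrix.map_sub c (map_sub c) A B
  have hone : (1 : Matrix (Fin n) (Fin n) ℂ).map c = 1 :=
    Matrix.map_one c (map_zero c) (map_one c)
  have hct : ∀ A : Matrix (Fin n) (Fin n) ℂ, Aᴴ = Aᵀ.map c := fun A => rfl
  have hctc : ∀ A : Matrix (Fin n) (Fin n) ℂ, Aᴴ.map c = Aᵀ := by
    intro A
    ext i j
    simp [Matrix.conjTranspose_apply, Matrix.map_apply]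
  set U : Matrix (Fin n ⊕ Fin n) (Fin n ⊕ Fin n) ℂ :=
    fromBlocks lam mu (mu.map c) (lam.map c) with hU
  set V : Matrix (Fin n ⊕ Fin n) (Fin n ⊕ Fin n) ℂ :=
    fromBlocks lamᴴ (-muᵀ) (-muᴴ) lamᵀ with hV
  have hUV : U * V = fromBlocks (lam * lamᴴ - mu * muᴴ) (mu * lamᵀ - lam * muᵀ)
      ((mu * lamᵀ - lam * muᵀ).map c) ((lam * lamᴴ - mu * muᴴ).map c) := by
    rw [hU, hV, fromBlocks_multiply]
    refine fromBlocks_inj.mpr ⟨by noncomm_ring, by noncomm_ring, ?_, ?_⟩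
    · rw [hsub, hmul, hmul, ← hct, ← hct]; noncomm_ring
    · rw [hsub, hmul, hmul, hctc, hctc]; noncomm_ring
  have hVU : V * U = fromBlocks (lamᴴ * lam - muᵀ * mu.map c)
      ((lamᵀ * mu.map c - muᴴ * lam).map c)
      (lamᵀ * mu.map c - muᴴ * lam) ((lamᴴ * lam - muᵀ * mu.map c).map c) := by
    rw [hU, hV, fromBlocks_multiply]
    refine fromBlocks_inj.mpr ⟨by noncomm_ring, ?_, by noncomm_ring, ?_⟩
    · rw [hsub, hmul, hmul, hctc, ← hct]
      have : (mu.map ⇑c).map ⇑c = mu := by ext i j; simp [Matrix.map_apply]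
      rw [this]; noncomm_ring
    · rw [hsub, hmul, hmul, ← hct, hctc]
      have : (mu.map ⇑c).map ⇑c = mu := by ext i j; simp [Matrix.map_apply]
      rw [this]; noncomm_ring
  constructor
  · rintro ⟨h1, h2⟩
    have huv1 : U * V = 1 := by
      rw [hUV, h2, sub_self, Matrix.map_zero _ (map_zero c), h1, hone, fromBlocks_one]
    have hvu1 : V * U = 1 := mul_eq_one_comm.mp huv1
    rw [hVU, ← fromBlocks_one] at hvu1
    obtain ⟨e1, -, e3, -⟩ := fromBlocks_inj.mp hvu1
    exact ⟨e1, sub_eq_zero.mp e3⟩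
  · rintro ⟨h1, h2⟩
    have hvu1 : V * U = 1 := by
      rw [hVU, h2, sub_self, Matrix.map_zero _ (map_zero c), h1, hone, fromBlocks_one]
    have huv1 : U * V = 1 := mul_eq_one_comm.mp hvu1
    rw [hUV, ← fromBlocks_one] at huv1
    obtain ⟨e1, e2, -, -⟩ := fromBlocks_inj.mp huv1
    exact ⟨e1, (sub_eq_zero.mp e2).symm⟩
end

section
/- Let n be a positive integer and let S = [[λ, μ], [conj(μ), conj(λ)]] be a complex 2n×2n matrix of block form which is complex symplectic (Sᵀ J S = J with J = [[0, I], [−I, 0]]). Then λ is invertible and λλᴴ − I is positive semidefinite; in particular the operator norm of λ satisfies ‖λ‖ ≥ 1. -/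
/-!
Transposition preserves the symplectic group, so `S J Sᵀ = J` as well. Its upper-right block
reads `λ λᴴ - μ μᴴ = I`, because the lower blocks of `S` are the entrywise conjugates of the upper
ones. Hence `λ λᴴ = I + μ μᴴ` is positive definite, which makes `λ` invertible, and in the
C⋆-algebra of matrices `1 ≤ λ λᴴ` gives `1 ≤ ‖λ λᴴ‖ = ‖λ‖²`.
-/

open Matrix
open scoped Matrix.Norms.L2Operator ComplexOrder

namespace Matrix

section Symplectic

variable {l R : Type*} [Fintype l] [DecidableEq l] [CommRing R]

theorem mem_symplecticGroup_of_transpose_mul_neg_J_mul {S : Matrix (l ⊕ l) (l ⊕ l) R}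
    (h : Sᵀ * -J l R * S = -J l R) : S ∈ symplecticGroup l R := by
  rw [SymplecticGroup.mem_iff']
  simpa only [mul_neg, neg_mul, neg_inj] using h

theorem mul_transpose_sub_mul_transpose_eq_one_of_fromBlocks_mem_symplecticGroup
    {A B C D : Matrix l l R} (h : fromBlocks A B C D ∈ symplecticGroup l R) :
    A * Dᵀ - B * Cᵀ = 1 := by
  have h₁₂ := congrArg toBlocks₁₂ (SymplecticGroup.mem_iff.mp h)
  simp only [J, fromBlocks_multiply, fromBlocks_transpose, toBlocks_fromBlocks₁₂, mul_zero, mul_one,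
    zero_add, add_zero, mul_neg, neg_mul] at h₁₂
  rw [← neg_inj, neg_sub, ← h₁₂, sub_eq_add_neg]

end Symplectic

variable {n 𝕜 : Type*} [Fintype n] [DecidableEq n] [RCLike 𝕜]

theorem posSemidef_mul_conjTranspose_sub_one_of_sub_eq_one {A B : Matrix n n 𝕜}
    (h : A * Aᴴ - B * Bᴴ = 1) : (A * Aᴴ - 1).PosSemidef := by
  rw [← h, sub_sub_cancel]
  exact posSemidef_self_mul_conjTranspose B

theorem isUnit_of_posSemidef_mul_conjTranspose_sub_one {A : Matrix n n 𝕜}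
    (h : (A * Aᴴ - 1).PosSemidef) : IsUnit A := by
  have hpos : (A * Aᴴ).PosDef := by simpa using PosDef.one.add_posSemidef h
  exact isUnit_of_mul_isUnit_left hpos.isUnit

open scoped MatrixOrder in
theorem one_le_l2_opNorm_of_posSemidef_mul_conjTranspose_sub_one [Nonempty n]
    {A : Matrix n n ℂ} (h : (A * Aᴴ - 1).PosSemidef) : 1 ≤ ‖A‖ := by
  have hle : ‖(1 : Matrix n n ℂ)‖ ≤ ‖A * star A‖ :=
    CStarAlgebra.norm_le_norm_of_nonneg_of_le zero_le_one (le_iff.mpr h)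
  rw [norm_one, CStarRing.norm_self_mul_star] at hle
  nlinarith [norm_nonneg A]

end Matrix

/-- If `S = [[λ, μ], [conj μ, conj λ]]` is complex symplectic, then `λ` is
invertible, `λλᴴ − I` is positive semidefinite, and the (L2) operator norm `‖λ‖ ≥ 1`. -/
theorem symplectic_upperLeft_block_invertible (n : ℕ) (hn : 0 < n)
    (lam mu : Matrix (Fin n) (Fin n) ℂ)
    (hS : (fromBlocks lam mu (mu.map (starRingEnd ℂ)) (lam.map (starRingEnd ℂ)))ᵀ *
        fromBlocks (0 : Matrix (Fin n) (Fin n) ℂ) (1 : Matrix (Fin n) (Fin n) ℂ)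
          (-1 : Matrix (Fin n) (Fin n) ℂ) (0 : Matrix (Fin n) (Fin n) ℂ) *
        fromBlocks lam mu (mu.map (starRingEnd ℂ)) (lam.map (starRingEnd ℂ)) =
      fromBlocks (0 : Matrix (Fin n) (Fin n) ℂ) (1 : Matrix (Fin n) (Fin n) ℂ)
        (-1 : Matrix (Fin n) (Fin n) ℂ) (0 : Matrix (Fin n) (Fin n) ℂ)) :
    IsUnit lam ∧ (lam * lamᴴ - 1).PosSemidef ∧ 1 ≤ ‖lam‖ := by
  have hJ : fromBlocks (0 : Matrix (Fin n) (Fin n) ℂ) 1 (-1) 0 = -J (Fin n) ℂ := by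
    simp [J, fromBlocks_neg]
  rw [hJ] at hS
  have hrel : lam * lamᴴ - mu * muᴴ = 1 :=
    mul_transpose_sub_mul_transpose_eq_one_of_fromBlocks_mem_symplecticGroup
      (mem_symplecticGroup_of_transpose_mul_neg_J_mul hS)
  have hpsd := posSemidef_mul_conjTranspose_sub_one_of_sub_eq_one hrel
  have : Nonempty (Fin n) := ⟨⟨0, hn⟩⟩
  exact ⟨isUnit_of_posSemidef_mul_conjTranspose_sub_one hpsd, hpsd,
    one_le_l2_opNorm_of_posSemidef_mul_conjTranspose_sub_one hpsd⟩
end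

section
/- Let n be a positive integer and let S = [[λ, μ], [conj(μ), conj(λ)]] be a complex 2n×2n matrix of block form which is complex symplectic (Sᵀ J S = J with J = [[0, I], [−I, 0]]). Then λ is invertible, the matrices λ⁻¹μ and conj(μ)λ⁻¹ are both symmetric, and I − (conj(μ)λ⁻¹)ᴴ(conj(μ)λ⁻¹) is positive definite; in particular the operator norm satisfies ‖conj(μ)λ⁻¹‖ < 1. -/
open Matrix
open scoped Matrix.Norms.L2Operator ComplexOrder

/-! A matrix is symplectic for `J` iff it is for `-J`, and the symplectic group is closed under
transposition, so `S` satisfies the block equations of both `Sᵀ J S = J` and `S J Sᵀ = J`. Among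
them are `λᴴλ - conj(μ)ᴴ conj(μ) = 1`, `conj(μ)ᵀ λ = λᵀ conj(μ)` and `μ λᵀ = λ μᵀ`. The first makes
`λᴴλ` positive definite, hence `λ` invertible, and rewrites `1 - Tᴴ T` for `T = conj(μ) λ⁻¹` as
`λ⁻ᴴ λ⁻¹`; the other two are the symmetry statements after multiplying by `λ⁻¹`. Finally
`‖T‖² = ‖Tᴴ T‖` lies in the spectrum of `Tᴴ T`, so strict positivity of `1 - Tᴴ T` forces it
below `1`. -/

theorem norm_lt_one_of_isStrictlyPositive_one_sub_star_mul_self {A : Type*} [CStarAlgebra A]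
    [PartialOrder A] [StarOrderedRing A] {a : A} (h : IsStrictlyPositive (1 - star a * a)) :
    ‖a‖ < 1 := by
  cases subsingleton_or_nontrivial A
  · simp [Subsingleton.elim a 0]
  have hmem : 1 - ‖star a * a‖ ∈ spectrum ℝ (1 - star a * a) := by
    rw [← algebraMap.coe_one (R := ℝ) (A := A), ← spectrum.singleton_sub_eq]
    exact Set.sub_mem_sub rfl CStarAlgebra.norm_mem_spectrum_of_nonneg
  have hpos := h.spectrum_pos hmem
  rw [CStarRing.norm_star_mul_self] at hpos
  nlinarith [norm_nonneg a]

namespace Matrix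

section Symplectic

variable {l R : Type*} [Fintype l] [DecidableEq l] [CommRing R]

theorem SymplecticGroup.mem_iff_transpose_mul_fromBlocks_mul {S : Matrix (l ⊕ l) (l ⊕ l) R} :
    S ∈ symplecticGroup l R ↔ Sᵀ * fromBlocks 0 1 (-1) 0 * S = fromBlocks 0 1 (-1) 0 := by
  have hJ : fromBlocks (0 : Matrix l l R) 1 (-1) 0 = -J l R := by simp [J, fromBlocks_neg]
  rw [SymplecticGroup.mem_iff', hJ, Matrix.mul_neg, Matrix.neg_mul, neg_inj]

theorem fromBlocks_mem_symplecticGroup_iff' {A B C D : Matrix l l R} :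
    fromBlocks A B C D ∈ symplecticGroup l R ↔
      Cᵀ * A = Aᵀ * C ∧ Dᵀ * A - Bᵀ * C = 1 ∧ Dᵀ * B = Bᵀ * D := by
  rw [SymplecticGroup.mem_iff', J, fromBlocks_transpose, fromBlocks_multiply, fromBlocks_multiply,
    fromBlocks_inj]
  simp only [Matrix.mul_zero, Matrix.mul_one, Matrix.mul_neg, Matrix.neg_mul, add_zero, zero_add,
    ← sub_eq_add_neg, sub_eq_zero]
  have htr : Cᵀ * B - Aᵀ * D = -1 ↔ Dᵀ * A - Bᵀ * C = 1 := by
    rw [← neg_inj, ← transpose_inj]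
    simp [transpose_mul]
  rw [htr, and_self_left]

theorem fromBlocks_mem_symplecticGroup_iff {A B C D : Matrix l l R} :
    fromBlocks A B C D ∈ symplecticGroup l R ↔
      B * Aᵀ = A * Bᵀ ∧ D * Aᵀ - C * Bᵀ = 1 ∧ D * Cᵀ = C * Dᵀ := by
  rw [← SymplecticGroup.transpose_mem_iff, fromBlocks_transpose,
    fromBlocks_mem_symplecticGroup_iff']
  simp only [transpose_transpose]

end Symplectic

variable {m n 𝕜 : Type*}

theorem transpose_map_starRingEnd [CommSemiring 𝕜] [StarRing 𝕜] (M : Matrix m n 𝕜) :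
    (M.map (starRingEnd 𝕜))ᵀ = Mᴴ :=
  rfl

theorem conjTranspose_map_starRingEnd [CommSemiring 𝕜] [StarRing 𝕜] (M : Matrix m n 𝕜) :
    (M.map (starRingEnd 𝕜))ᴴ = Mᵀ := by
  ext i j
  simp [conjTranspose_apply, starRingEnd_apply]

variable [Fintype n] [DecidableEq n]

theorem transpose_mul_inv_eq_of_transpose_mul_comm [CommRing 𝕜] {A C : Matrix n n 𝕜}
    (hA : IsUnit A) (h : Cᵀ * A = Aᵀ * C) : (C * A⁻¹)ᵀ = C * A⁻¹ := by
  have hdet := (isUnit_iff_isUnit_det A).mp hA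
  calc (C * A⁻¹)ᵀ = Aᵀ⁻¹ * (Cᵀ * A) * A⁻¹ := by
        rw [transpose_mul, transpose_nonsing_inv, Matrix.mul_assoc, Matrix.mul_assoc,
          mul_nonsing_inv _ hdet, Matrix.mul_one]
    _ = C * A⁻¹ := by
        rw [h, ← Matrix.mul_assoc, nonsing_inv_mul _ (by rwa [det_transpose]), Matrix.one_mul]

theorem transpose_inv_mul_eq_of_mul_transpose_comm [CommRing 𝕜] {A B : Matrix n n 𝕜}
    (hA : IsUnit A) (h : B * Aᵀ = A * Bᵀ) : (A⁻¹ * B)ᵀ = A⁻¹ * B := by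
  have hsymm := transpose_mul_inv_eq_of_transpose_mul_comm ((isUnit_transpose A).mpr hA)
    (C := Bᵀ) (by simpa using h)
  rw [← transpose_nonsing_inv, ← transpose_mul, transpose_transpose] at hsymm
  exact hsymm.symm

theorem isUnit_of_conjTranspose_mul_self_sub_eq_one [RCLike 𝕜] {A C : Matrix n n 𝕜}
    (h : Aᴴ * A - Cᴴ * C = 1) : IsUnit A := by
  have hpos : (Aᴴ * A).PosDef := by
    rw [← sub_add_cancel (Aᴴ * A) (Cᴴ * C), h]
    exact PosDef.one.add_posSemidef (posSemidef_conjTranspose_mul_self C)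
  exact isUnit_of_mul_isUnit_right hpos.isUnit

theorem one_sub_conjTranspose_mul_self_mul_inv [Field 𝕜] [StarRing 𝕜] {A C : Matrix n n 𝕜}
    (hA : IsUnit A) (h : Aᴴ * A - Cᴴ * C = 1) :
    1 - (C * A⁻¹)ᴴ * (C * A⁻¹) = A⁻¹ᴴ * A⁻¹ := by
  have hdet := (isUnit_iff_isUnit_det A).mp hA
  have hinv : A⁻¹ᴴ * Aᴴ = 1 := by
    rw [← conjTranspose_mul, mul_nonsing_inv _ hdet, conjTranspose_one]
  calc 1 - (C * A⁻¹)ᴴ * (C * A⁻¹) = A⁻¹ᴴ * (Aᴴ * A - Cᴴ * C) * A⁻¹ := by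
        rw [conjTranspose_mul, Matrix.mul_sub, Matrix.sub_mul]
        congr 1
        · rw [← Matrix.mul_assoc, hinv, Matrix.one_mul, mul_nonsing_inv _ hdet]
        · simp only [Matrix.mul_assoc]
    _ = A⁻¹ᴴ * A⁻¹ := by rw [h, Matrix.mul_one]

theorem posDef_one_sub_conjTranspose_mul_self_mul_inv [RCLike 𝕜] {A C : Matrix n n 𝕜}
    (hA : IsUnit A) (h : Aᴴ * A - Cᴴ * C = 1) :
    (1 - (C * A⁻¹)ᴴ * (C * A⁻¹)).PosDef := by
  rw [one_sub_conjTranspose_mul_self_mul_inv hA h]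
  exact PosDef.conjTranspose_mul_self _ (mulVec_injective_of_isUnit (isUnit_nonsing_inv_iff.mpr hA))

open scoped MatrixOrder in
theorem norm_lt_one_of_posDef_one_sub_conjTranspose_mul_self {T : Matrix n n ℂ}
    (h : (1 - Tᴴ * T).PosDef) : ‖T‖ < 1 :=
  norm_lt_one_of_isStrictlyPositive_one_sub_star_mul_self h.isStrictlyPositive

end Matrix

theorem symplectic_squeezing_matrix_properties_general (n : ℕ)
    (lam mu : Matrix (Fin n) (Fin n) ℂ)
    (hS : (fromBlocks lam mu (mu.map (starRingEnd ℂ)) (lam.map (starRingEnd ℂ)))ᵀ *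
        fromBlocks (0 : Matrix (Fin n) (Fin n) ℂ) (1 : Matrix (Fin n) (Fin n) ℂ)
          (-1 : Matrix (Fin n) (Fin n) ℂ) (0 : Matrix (Fin n) (Fin n) ℂ) *
        fromBlocks lam mu (mu.map (starRingEnd ℂ)) (lam.map (starRingEnd ℂ)) =
      fromBlocks (0 : Matrix (Fin n) (Fin n) ℂ) (1 : Matrix (Fin n) (Fin n) ℂ)
        (-1 : Matrix (Fin n) (Fin n) ℂ) (0 : Matrix (Fin n) (Fin n) ℂ)) :
    IsUnit lam ∧
    (lam⁻¹ * mu)ᵀ = lam⁻¹ * mu ∧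
    (mu.map (starRingEnd ℂ) * lam⁻¹)ᵀ = mu.map (starRingEnd ℂ) * lam⁻¹ ∧
    (1 - (mu.map (starRingEnd ℂ) * lam⁻¹)ᴴ * (mu.map (starRingEnd ℂ) * lam⁻¹)).PosDef ∧
    ‖mu.map (starRingEnd ℂ) * lam⁻¹‖ < 1 := by
  have hsymp := SymplecticGroup.mem_iff_transpose_mul_fromBlocks_mul.mpr hS
  obtain ⟨hsymm, hgram, -⟩ := fromBlocks_mem_symplecticGroup_iff'.mp hsymp
  obtain ⟨hsymm', -, -⟩ := fromBlocks_mem_symplecticGroup_iff.mp hsymp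
  rw [transpose_map_starRingEnd, ← conjTranspose_map_starRingEnd] at hgram
  have hunit := isUnit_of_conjTranspose_mul_self_sub_eq_one hgram
  have hpos := posDef_one_sub_conjTranspose_mul_self_mul_inv hunit hgram
  exact ⟨hunit, transpose_inv_mul_eq_of_mul_transpose_comm hunit hsymm',
    transpose_mul_inv_eq_of_transpose_mul_comm hunit hsymm, hpos,
    norm_lt_one_of_posDef_one_sub_conjTranspose_mul_self hpos⟩

/-- If `S = [[λ, μ], [conj μ, conj λ]]` is complex symplectic, then `λ` is
invertible, `λ⁻¹μ` and `conj(μ)λ⁻¹` are symmetric, `I − (conj(μ)λ⁻¹)ᴴ(conj(μ)λ⁻¹)` is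
positive definite, and the (L2) operator norm `‖conj(μ)λ⁻¹‖ < 1`. -/
theorem symplectic_squeezing_matrix_properties (n : ℕ) (hn : 0 < n)
    (lam mu : Matrix (Fin n) (Fin n) ℂ)
    (hS : (fromBlocks lam mu (mu.map (starRingEnd ℂ)) (lam.map (starRingEnd ℂ)))ᵀ *
        fromBlocks (0 : Matrix (Fin n) (Fin n) ℂ) (1 : Matrix (Fin n) (Fin n) ℂ)
          (-1 : Matrix (Fin n) (Fin n) ℂ) (0 : Matrix (Fin n) (Fin n) ℂ) *
        fromBlocks lam mu (mu.map (starRingEnd ℂ)) (lam.map (starRingEnd ℂ)) =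
      fromBlocks (0 : Matrix (Fin n) (Fin n) ℂ) (1 : Matrix (Fin n) (Fin n) ℂ)
        (-1 : Matrix (Fin n) (Fin n) ℂ) (0 : Matrix (Fin n) (Fin n) ℂ)) :
    IsUnit lam ∧
    (lam⁻¹ * mu)ᵀ = lam⁻¹ * mu ∧
    (mu.map (starRingEnd ℂ) * lam⁻¹)ᵀ = mu.map (starRingEnd ℂ) * lam⁻¹ ∧
    (1 - (mu.map (starRingEnd ℂ) * lam⁻¹)ᴴ * (mu.map (starRingEnd ℂ) * lam⁻¹)).PosDef ∧
    ‖mu.map (starRingEnd ℂ) * lam⁻¹‖ < 1 :=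
  symplectic_squeezing_matrix_properties_general n lam mu hS
end

section
/- Let n be a positive integer, let A be a complex symmetric n×n matrix with I − AᴴA positive definite (operator norm ‖A‖ < 1), and let S = [[λ, μ], [ν, ρ]] be a complex symplectic 2n×2n matrix (Sᵀ J S = J with J = [[0, I], [−I, 0]]) which maps K-positive vectors to K-positive vectors, i.e. vᴴ K v > 0 implies (Sv)ᴴ K (Sv) > 0, where K = [[I, 0], [0, −I]]. Then the matrix λ + μA is invertible. -/
open Matrix
open scoped ComplexOrder

/-!
If `(λ + μA) x = 0` with `x ≠ 0`, the vector `v = (x, Ax)` is `K`-positive, since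
`vᴴ K v = xᴴ (I - AᴴA) x > 0`, while `S v = (0, (ν + ρA) x)` has
`(Sv)ᴴ K (Sv) = -‖(ν + ρA) x‖² ≤ 0`.
-/

namespace Matrix

variable {R k l m n : Type*} [Fintype m] [Fintype n]

theorem fromBlocks_mulVec_sumElim_mulVec [NonUnitalSemiring R] (a : Matrix l m R)
    (b : Matrix l n R) (c : Matrix k m R) (d : Matrix k n R) (A : Matrix n m R) (x : m → R) :
    fromBlocks a b c d *ᵥ Sum.elim x (A *ᵥ x) =
      Sum.elim ((a + b * A) *ᵥ x) ((c + d * A) *ᵥ x) := by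
  simp only [fromBlocks_mulVec, Sum.elim_comp_inl, Sum.elim_comp_inr, add_mulVec, mulVec_mulVec]

theorem star_dotProduct_fromBlocks_one_neg_one_mulVec_sumElim [DecidableEq m] [DecidableEq n]
    [Ring R] [Star R] (x : m → R) (y : n → R) :
    star (Sum.elim x y) ⬝ᵥ (fromBlocks (1 : Matrix m m R) 0 0 (-1) *ᵥ Sum.elim x y) =
      star x ⬝ᵥ x - star y ⬝ᵥ y := by
  simp only [fromBlocks_mulVec, Sum.elim_comp_inl, Sum.elim_comp_inr, one_mulVec, zero_mulVec,
    add_zero, zero_add, neg_mulVec, Function.star_sumElim, sumElim_dotProduct_sumElim,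
    dotProduct_neg, sub_eq_add_neg]

theorem star_dotProduct_one_sub_conjTranspose_mul_self_mulVec [DecidableEq m] [CommRing R]
    [StarRing R] (A : Matrix n m R) (x : m → R) :
    star x ⬝ᵥ ((1 - Aᴴ * A) *ᵥ x) = star x ⬝ᵥ x - star (A *ᵥ x) ⬝ᵥ (A *ᵥ x) := by
  rw [sub_mulVec, dotProduct_sub, one_mulVec, ← mulVec_mulVec, dotProduct_mulVec, star_mulVec]

end Matrix

theorem semigroup_action_denominator_invertible_general (n : ℕ)
    (A lam mu nu rho : Matrix (Fin n) (Fin n) ℂ)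
    (hApd : ((1 : Matrix (Fin n) (Fin n) ℂ) - Aᴴ * A).PosDef)
    (hpos : ∀ v : (Fin n ⊕ Fin n) → ℂ,
      0 < star v ⬝ᵥ ((fromBlocks (1 : Matrix (Fin n) (Fin n) ℂ) 0 0
          (-1 : Matrix (Fin n) (Fin n) ℂ)) *ᵥ v) →
      0 < star ((fromBlocks lam mu nu rho) *ᵥ v) ⬝ᵥ
        ((fromBlocks (1 : Matrix (Fin n) (Fin n) ℂ) 0 0
          (-1 : Matrix (Fin n) (Fin n) ℂ)) *ᵥ ((fromBlocks lam mu nu rho) *ᵥ v))) :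
    IsUnit (lam + mu * A) := by
  rw [isUnit_iff_isUnit_det, isUnit_iff_ne_zero, Ne, ← exists_mulVec_eq_zero_iff]
  rintro ⟨x, hx, hker⟩
  have hv := hApd.dotProduct_mulVec_pos hx
  rw [star_dotProduct_one_sub_conjTranspose_mul_self_mulVec,
    ← star_dotProduct_fromBlocks_one_neg_one_mulVec_sumElim] at hv
  have hSv := hpos _ hv
  rw [fromBlocks_mulVec_sumElim_mulVec, hker,
    star_dotProduct_fromBlocks_one_neg_one_mulVec_sumElim, star_zero, zero_dotProduct, zero_sub, neg_pos] at hSv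
  exact (dotProduct_star_self_nonneg _).not_gt hSv

/-- If `A` is complex symmetric with `I − AᴴA` positive definite (`‖A‖ < 1`)
and `S = [[λ, μ], [ν, ρ]]` is complex symplectic mapping `K`-positive vectors to
`K`-positive vectors, then `λ + μA` is invertible. -/
theorem semigroup_action_denominator_invertible (n : ℕ) (hn : 0 < n)
    (A lam mu nu rho : Matrix (Fin n) (Fin n) ℂ)
    (hA : Aᵀ = A) (hApd : ((1 : Matrix (Fin n) (Fin n) ℂ) - Aᴴ * A).PosDef)
    (hS : (fromBlocks lam mu nu rho)ᵀ *
        fromBlocks (0 : Matrix (Fin n) (Fin n) ℂ) (1 : Matrix (Fin n) (Fin n) ℂ)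
          (-1 : Matrix (Fin n) (Fin n) ℂ) (0 : Matrix (Fin n) (Fin n) ℂ) *
        fromBlocks lam mu nu rho =
      fromBlocks (0 : Matrix (Fin n) (Fin n) ℂ) (1 : Matrix (Fin n) (Fin n) ℂ)
        (-1 : Matrix (Fin n) (Fin n) ℂ) (0 : Matrix (Fin n) (Fin n) ℂ))
    (hpos : ∀ v : (Fin n ⊕ Fin n) → ℂ,
      0 < star v ⬝ᵥ ((fromBlocks (1 : Matrix (Fin n) (Fin n) ℂ) 0 0
          (-1 : Matrix (Fin n) (Fin n) ℂ)) *ᵥ v) →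
      0 < star ((fromBlocks lam mu nu rho) *ᵥ v) ⬝ᵥ
        ((fromBlocks (1 : Matrix (Fin n) (Fin n) ℂ) 0 0
          (-1 : Matrix (Fin n) (Fin n) ℂ)) *ᵥ ((fromBlocks lam mu nu rho) *ᵥ v))) :
    IsUnit (lam + mu * A) :=
  semigroup_action_denominator_invertible_general n A lam mu nu rho hApd hpos
end

section
/- Let n be a positive integer and let A be a complex symmetric n×n matrix (Aᵀ = A) with I − AᴴA positive definite. Set Λ = (I − AᴴA)^{−1/2} and Λ̄ = (I − AAᴴ)^{−1/2} (positive definite inverse square roots). Then the 2n×2n block matrix ι(A) = [[Λ, AᴴΛ̄], [AΛ, Λ̄]] is complex symplectic, i.e. ι(A)ᵀ J ι(A) = J with J = [[0, I], [−I, 0]]; moreover its lower-left block composed with the inverse of its upper-left block equals A, i.e. (AΛ)Λ⁻¹ = A. -/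
open Matrix
open scoped ComplexOrder

/-!
Transposing `(I - AᴴA)ΛΛ = I` and using `Aᵀ = A` shows that `Λᵀ` is a positive definite inverse
square root of `I - AAᴴ`, so `Λᵀ = Λ̄` by uniqueness of positive square roots. With `Λᵀ = Λ̄` and
both `A`, `Aᴴ` symmetric, the diagonal blocks of `ι(A)ᵀ J ι(A)` cancel and the off-diagonal ones
are `Λ̄(I - AAᴴ)Λ̄ = I` and `-Λ(I - AᴴA)Λ = -I`.
-/

namespace Matrix

variable {n 𝕜 R : Type*} [Fintype n]

lemma PosSemidef.eq_of_mul_self_eq [DecidableEq n] [RCLike 𝕜] {L L' : Matrix n n 𝕜}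
    (hL : L.PosSemidef) (hL' : L'.PosSemidef) (h : L * L = L' * L') : L = L' := by
  open scoped MatrixOrder Matrix.Norms.L2Operator in
  exact (CFC.sq_eq_sq_iff L L' hL.nonneg hL'.nonneg).mp (by rw [sq, sq, h])

lemma PosSemidef.eq_of_mul_self_mul_eq_one [DecidableEq n] [RCLike 𝕜] {L L' M : Matrix n n 𝕜}
    (hL : L.PosSemidef) (hL' : L'.PosSemidef) (h : L * L * M = 1) (h' : L' * L' * M = 1) :
    L = L' :=
  hL.eq_of_mul_self_eq hL' (left_inv_eq_right_inv h (mul_eq_one_comm.mp h'))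

lemma IsSymm.transpose_conjTranspose_mul_self [CommSemiring 𝕜] [StarRing 𝕜] {A : Matrix n n 𝕜}
    (hA : A.IsSymm) : (Aᴴ * A)ᵀ = A * Aᴴ := by
  rw [transpose_mul, hA.eq, hA.conjTranspose.eq]

theorem fromBlocks_transpose_mul_symplecticForm_mul_self [DecidableEq n] [CommRing R]
    {A B L L' : Matrix n n R}
    (hA : A.IsSymm) (hB : B.IsSymm) (hL : Lᵀ = L')
    (h : L * L * (1 - B * A) = 1) (h' : L' * L' * (1 - A * B) = 1) :
    (fromBlocks L (B * L') (A * L) L')ᵀ * fromBlocks 0 1 (-1) 0 *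
        fromBlocks L (B * L') (A * L) L' = fromBlocks 0 1 (-1) 0 := by
  have hL' : L'ᵀ = L := by rw [← hL, transpose_transpose]
  have hLML : L * (1 - B * A) * L = 1 := mul_eq_one_comm.mp (by rwa [mul_assoc] at h)
  have hLML' : L' * (1 - A * B) * L' = 1 := mul_eq_one_comm.mp (by rwa [mul_assoc] at h')
  simp only [fromBlocks_transpose, transpose_mul, hA.eq, hB.eq, hL, hL', fromBlocks_multiply,
    mul_zero, mul_neg, mul_one, zero_add, add_zero, neg_mul, Matrix.mul_assoc, neg_add_cancel,
    fromBlocks_inj, and_true, true_and]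
  refine ⟨?_, ?_⟩
  · rw [← hLML']; noncomm_ring
  · rw [← hLML]; noncomm_ring

end Matrix

theorem iota_is_symplectic_general (n : ℕ)
    (A Lam Lamb : Matrix (Fin n) (Fin n) ℂ)
    (hA : Aᵀ = A)
    (hLam : Lam.PosDef)
    (hLamSq : Lam * Lam * ((1 : Matrix (Fin n) (Fin n) ℂ) - Aᴴ * A) = 1)
    (hLamb : Lamb.PosDef)
    (hLambSq : Lamb * Lamb * ((1 : Matrix (Fin n) (Fin n) ℂ) - A * Aᴴ) = 1) :
    ((fromBlocks Lam (Aᴴ * Lamb) (A * Lam) Lamb)ᵀ *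
        fromBlocks (0 : Matrix (Fin n) (Fin n) ℂ) (1 : Matrix (Fin n) (Fin n) ℂ)
          (-1 : Matrix (Fin n) (Fin n) ℂ) (0 : Matrix (Fin n) (Fin n) ℂ) *
        fromBlocks Lam (Aᴴ * Lamb) (A * Lam) Lamb =
      fromBlocks (0 : Matrix (Fin n) (Fin n) ℂ) (1 : Matrix (Fin n) (Fin n) ℂ)
        (-1 : Matrix (Fin n) (Fin n) ℂ) (0 : Matrix (Fin n) (Fin n) ℂ)) ∧
    (A * Lam) * Lam⁻¹ = A := by
  have hAsymm : A.IsSymm := hA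
  have hLamTSq : Lamᵀ * Lamᵀ * (1 - A * Aᴴ) = 1 := by
    rw [← hAsymm.transpose_conjTranspose_mul_self, ← transpose_one, ← transpose_sub,
      ← transpose_mul, ← transpose_mul, mul_eq_one_comm.mp hLamSq, transpose_one]
  have hLamT : Lamᵀ = Lamb :=
    hLam.transpose.posSemidef.eq_of_mul_self_mul_eq_one hLamb.posSemidef hLamTSq hLambSq
  exact ⟨fromBlocks_transpose_mul_symplecticForm_mul_self hAsymm hAsymm.conjTranspose hLamT
      hLamSq hLambSq,
    mul_nonsing_inv_cancel_right _ _ ((isUnit_iff_isUnit_det _).mp hLam.isUnit)⟩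

/-- For complex symmetric `A` with `I − AᴴA` positive definite, and with
`Λ = (I − AᴴA)^{−1/2}`, `Λ̄ = (I − AAᴴ)^{−1/2}` the positive definite inverse square roots
(characterized by being positive definite with `Λ·Λ·(I − AᴴA) = I`, `Λ̄·Λ̄·(I − AAᴴ) = I`),
the block matrix `ι(A) = [[Λ, AᴴΛ̄], [AΛ, Λ̄]]` is complex symplectic and
`(AΛ)·Λ⁻¹ = A`. -/
theorem iota_is_symplectic (n : ℕ) (hn : 0 < n)
    (A Lam Lamb : Matrix (Fin n) (Fin n) ℂ)
    (hA : Aᵀ = A) (hApd : ((1 : Matrix (Fin n) (Fin n) ℂ) - Aᴴ * A).PosDef)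
    (hLam : Lam.PosDef)
    (hLamSq : Lam * Lam * ((1 : Matrix (Fin n) (Fin n) ℂ) - Aᴴ * A) = 1)
    (hLamb : Lamb.PosDef)
    (hLambSq : Lamb * Lamb * ((1 : Matrix (Fin n) (Fin n) ℂ) - A * Aᴴ) = 1) :
    ((fromBlocks Lam (Aᴴ * Lamb) (A * Lam) Lamb)ᵀ *
        fromBlocks (0 : Matrix (Fin n) (Fin n) ℂ) (1 : Matrix (Fin n) (Fin n) ℂ)
          (-1 : Matrix (Fin n) (Fin n) ℂ) (0 : Matrix (Fin n) (Fin n) ℂ) *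
        fromBlocks Lam (Aᴴ * Lamb) (A * Lam) Lamb =
      fromBlocks (0 : Matrix (Fin n) (Fin n) ℂ) (1 : Matrix (Fin n) (Fin n) ℂ)
        (-1 : Matrix (Fin n) (Fin n) ℂ) (0 : Matrix (Fin n) (Fin n) ℂ)) ∧
    (A * Lam) * Lam⁻¹ = A :=
  iota_is_symplectic_general n A Lam Lamb hA hLam hLamSq hLamb hLambSq
end

section
/- Let A be a complex symmetric n×n matrix (Aᵀ = A) with I − AᴴA positive definite. Then A·(I − AᴴA)^{−1/2} = (I − AAᴴ)^{−1/2}·A, where the inverse square roots are the positive definite ones. -/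
open Matrix
open scoped ComplexOrder

/-!
`A (I - AᴴA) = (I - AAᴴ) A`, so `A` also intertwines the inverses `Λ²` and `Λ̄²`. Intertwining
then passes to the positive square roots: `M = Λ̄A - AΛ` solves `Λ̄M + MΛ = Λ̄²A - AΛ² = 0`, and
if `Λv = λv` with `λ ≥ 0` then `Λ̄(Mv) = -λ(Mv)`, which positivity of `Λ̄` allows only for
`Mv = 0`; the eigenvectors of `Λ` span, so `M = 0`.
-/

theorem SemiconjBy.one_sub_mul_swap {R : Type*} [Ring R] (a b : R) :
    SemiconjBy a (1 - b * a) (1 - a * b) := by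
  simp only [SemiconjBy, mul_sub, sub_mul, mul_one, one_mul, mul_assoc]

theorem SemiconjBy.of_mul_eq_one {M : Type*} [Monoid M] {a s t p q : M}
    (h : SemiconjBy a s t) (hs : s * p = 1) (ht : q * t = 1) : SemiconjBy a p q :=
  calc a * p = q * t * a * p := by rw [ht, one_mul]
    _ = q * (a * s * p) := by rw [h.eq]; simp only [mul_assoc]
    _ = q * a := by rw [mul_assoc a, hs, mul_one]

namespace Matrix

variable {𝕜 m n : Type*} [RCLike 𝕜] [Fintype m] [Fintype n]

theorem PosDef.eq_zero_of_mulVec_eq_neg_smul {Q : Matrix m m 𝕜} (hQ : Q.PosDef)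
    {w : m → 𝕜} {c : ℝ} (hc : 0 ≤ c) (hw : Q *ᵥ w = -(c : 𝕜) • w) : w = 0 := by
  by_contra hw0
  have hpos := hQ.dotProduct_mulVec_pos hw0
  rw [hw, dotProduct_smul, smul_eq_mul, neg_mul] at hpos
  have hnonneg : (0 : 𝕜) ≤ c * (star w ⬝ᵥ w) :=
    mul_nonneg (RCLike.ofReal_nonneg.mpr hc) (dotProduct_star_self_nonneg w)
  exact (neg_pos.mp hpos).not_ge hnonneg

theorem eq_zero_of_posDef_mul_add_mul_posSemidef [DecidableEq n] {Q : Matrix m m 𝕜}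
    {P : Matrix n n 𝕜} {M : Matrix m n 𝕜} (hQ : Q.PosDef) (hP : P.PosSemidef)
    (h : Q * M + M * P = 0) : M = 0 := by
  refine (toLpLin 2 2).injective <| hP.1.eigenvectorBasis.toBasis.ext fun j ↦ ?_
  set v := ⇑(hP.1.eigenvectorBasis j)
  have hMv : Q *ᵥ (M *ᵥ v) = -(hP.1.eigenvalues j : 𝕜) • (M *ᵥ v) := by
    rw [mulVec_mulVec, eq_neg_of_add_eq_zero_left h, neg_mulVec, ← mulVec_mulVec,
      hP.1.mulVec_eigenvectorBasis, mulVec_smul, RCLike.real_smul_eq_coe_smul (K := 𝕜), neg_smul]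
  have hMv0 := hQ.eq_zero_of_mulVec_eq_neg_smul (hP.eigenvalues_nonneg j) hMv
  ext i
  simpa [toLpLin_apply] using congrFun hMv0 i

theorem PosDef.mul_eq_mul_of_sq_mul_eq_mul_sq [DecidableEq n] {Q : Matrix m m 𝕜}
    {P : Matrix n n 𝕜} {A : Matrix m n 𝕜} (hQ : Q.PosDef) (hP : P.PosSemidef)
    (h : Q * Q * A = A * (P * P)) : Q * A = A * P := by
  refine sub_eq_zero.mp (eq_zero_of_posDef_mul_add_mul_posSemidef (M := Q * A - A * P) hQ hP ?_)
  rw [Matrix.mul_assoc] at h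
  simp only [Matrix.mul_sub, Matrix.sub_mul, Matrix.mul_assoc, h]
  abel

end Matrix

theorem symmetric_commutes_with_inverse_sqrt_general (n : ℕ)
    (A Lam Lamb : Matrix (Fin n) (Fin n) ℂ)
    (hLam : Lam.PosDef)
    (hLamSq : Lam * Lam * ((1 : Matrix (Fin n) (Fin n) ℂ) - Aᴴ * A) = 1)
    (hLamb : Lamb.PosDef)
    (hLambSq : Lamb * Lamb * ((1 : Matrix (Fin n) (Fin n) ℂ) - A * Aᴴ) = 1) :
    A * Lam = Lamb * A := by
  have hSq : SemiconjBy A (Lam * Lam) (Lamb * Lamb) :=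
    (SemiconjBy.one_sub_mul_swap A Aᴴ).of_mul_eq_one (mul_eq_one_comm.mp hLamSq) hLambSq
  exact (hLamb.mul_eq_mul_of_sq_mul_eq_mul_sq hLam.posSemidef hSq.eq.symm).symm

/-- For complex symmetric `A` with `I − AᴴA` positive definite, the positive
definite inverse square roots `Λ = (I − AᴴA)^{−1/2}` and `Λ̄ = (I − AAᴴ)^{−1/2}`
(characterized by positive definiteness and `Λ·Λ·(I − AᴴA) = I`, `Λ̄·Λ̄·(I − AAᴴ) = I`)
satisfy `A·Λ = Λ̄·A`. -/
theorem symmetric_commutes_with_inverse_sqrt (n : ℕ)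
    (A Lam Lamb : Matrix (Fin n) (Fin n) ℂ)
    (hA : Aᵀ = A) (hApd : ((1 : Matrix (Fin n) (Fin n) ℂ) - Aᴴ * A).PosDef)
    (hLam : Lam.PosDef)
    (hLamSq : Lam * Lam * ((1 : Matrix (Fin n) (Fin n) ℂ) - Aᴴ * A) = 1)
    (hLamb : Lamb.PosDef)
    (hLambSq : Lamb * Lamb * ((1 : Matrix (Fin n) (Fin n) ℂ) - A * Aᴴ) = 1) :
    A * Lam = Lamb * A :=
  symmetric_commutes_with_inverse_sqrt_general n A Lam Lamb hLam hLamSq hLamb hLambSq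
end

section
/- Let n be a positive integer, let S = [[λ, μ], [ν, ρ]] be a complex symplectic 2n×2n matrix (Sᵀ J S = J with J = [[0, I], [−I, 0]]) which maps K-positive vectors to K-positive vectors (vᴴ K v > 0 implies (Sv)ᴴ K (Sv) > 0, where K = [[I, 0], [0, −I]]), and let A be a complex symmetric n×n matrix with I − AᴴA positive definite. Then λ, λ + μA, and I + Aλ⁻¹μ are invertible and νλ⁻¹ + (λ⁻¹)ᵀ (I + Aλ⁻¹μ)⁻¹ A λ⁻¹ = (ρA + ν)(λ + μA)⁻¹. -/
/-!
The vectors `(v, 0)` and `(v, A v)` with `v ≠ 0` are `K`-positive, the latter because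
`I - AᴴA` is positive definite. Their images under `S` have first blocks `λ v` and `(λ + μA) v`,
which cannot vanish, as the image would then have nonpositive `K`-form; so `λ` and `λ + μA` are
invertible, and `I + Aλ⁻¹μ` is invertible by Sylvester's determinant identity. The blocks of
`SᵀJS = J` give `λᵀν = νᵀλ` and `λᵀρ = I + νᵀμ`, that is `ρ = νλ⁻¹μ + λ⁻ᵀ`; together with the
push-through identity `(I + Aλ⁻¹μ)⁻¹Aλ⁻¹ = A(λ + μA)⁻¹` this turns the left-hand side into
`(ρA + ν)(λ + μA)⁻¹`.
-/

open Matrix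
open scoped ComplexOrder

namespace Matrix

section CommRing

variable {m R : Type*} [Fintype m] [DecidableEq m] [CommRing R]

theorem transpose_mul_relations_of_symplectic_fromBlocks {lam mu nu rho : Matrix m m R}
    (hS : (fromBlocks lam mu nu rho)ᵀ * fromBlocks 0 1 (-1) 0 * fromBlocks lam mu nu rho =
      fromBlocks 0 1 (-1) 0) :
    lamᵀ * nu = nuᵀ * lam ∧ lamᵀ * rho = 1 + nuᵀ * mu := by
  rw [fromBlocks_transpose, fromBlocks_multiply, fromBlocks_multiply] at hS
  obtain ⟨h11, h12, -, -⟩ := fromBlocks_inj.mp hS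
  simp only [Matrix.mul_zero, Matrix.mul_one, Matrix.mul_neg, Matrix.neg_mul,
    zero_add, add_zero] at h11 h12
  exact ⟨(neg_add_eq_zero.mp h11).symm, by rw [← h12]; abel⟩

theorem eq_mul_inv_mul_add_inv_transpose {lam mu nu rho : Matrix m m R} (hlam : IsUnit lam)
    (h₁ : lamᵀ * nu = nuᵀ * lam) (h₂ : lamᵀ * rho = 1 + nuᵀ * mu) :
    rho = nu * lam⁻¹ * mu + lam⁻¹ᵀ := by
  have hdet := (isUnit_iff_isUnit_det lam).mp hlam
  refine ((isUnit_transpose lam).mpr hlam).mul_left_cancel ?_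
  calc lamᵀ * rho = 1 + nuᵀ * mu := h₂
    _ = (lamᵀ * nu) * lam⁻¹ * mu + lamᵀ * lam⁻¹ᵀ := by
      rw [h₁, ← transpose_mul, nonsing_inv_mul _ hdet, transpose_one,
        mul_nonsing_inv_cancel_right _ _ hdet, add_comm]
    _ = lamᵀ * (nu * lam⁻¹ * mu + lam⁻¹ᵀ) := by noncomm_ring

theorem isUnit_one_add_mul_inv_mul {lam mu A : Matrix m m R} (hlam : IsUnit lam)
    (hC : IsUnit (lam + mu * A)) : IsUnit (1 + A * lam⁻¹ * mu) := by
  have hdet := (isUnit_iff_isUnit_det lam).mp hlam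
  have hfac : lam⁻¹ * (lam + mu * A) = 1 + lam⁻¹ * mu * A := by
    rw [Matrix.mul_add, nonsing_inv_mul _ hdet, Matrix.mul_assoc]
  rw [isUnit_iff_isUnit_det, Matrix.mul_assoc, det_one_add_mul_comm, ← hfac, det_mul]
  exact (isUnit_nonsing_inv_det lam hdet).mul ((isUnit_iff_isUnit_det _).mp hC)

theorem inv_one_add_mul_inv_mul_mul_mul_inv {lam mu A : Matrix m m R} (hlam : IsUnit lam)
    (hC : IsUnit (lam + mu * A)) :
    (1 + A * lam⁻¹ * mu)⁻¹ * A * lam⁻¹ = A * (lam + mu * A)⁻¹ := by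
  have hB := (isUnit_iff_isUnit_det _).mp (isUnit_one_add_mul_inv_mul hlam hC)
  have hCdet := (isUnit_iff_isUnit_det _).mp hC
  have push : A * lam⁻¹ * (lam + mu * A) = (1 + A * lam⁻¹ * mu) * A := by
    rw [Matrix.mul_add, nonsing_inv_mul_cancel_right _ _ ((isUnit_iff_isUnit_det lam).mp hlam)]
    noncomm_ring
  calc (1 + A * lam⁻¹ * mu)⁻¹ * A * lam⁻¹
      = (1 + A * lam⁻¹ * mu)⁻¹ * (A * lam⁻¹ * (lam + mu * A)) * (lam + mu * A)⁻¹ := by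
        rw [← Matrix.mul_assoc, mul_nonsing_inv_cancel_right _ _ hCdet, Matrix.mul_assoc _ A]
    _ = A * (lam + mu * A)⁻¹ := by rw [push, nonsing_inv_mul_cancel_left _ _ hB]

theorem mul_inv_add_inv_transpose_mul_eq {A lam mu nu rho : Matrix m m R} (hlam : IsUnit lam)
    (hC : IsUnit (lam + mu * A)) (hrho : rho = nu * lam⁻¹ * mu + lam⁻¹ᵀ) :
    nu * lam⁻¹ + lam⁻¹ᵀ * (1 + A * lam⁻¹ * mu)⁻¹ * A * lam⁻¹ =
      (rho * A + nu) * (lam + mu * A)⁻¹ := by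
  have hCdet := (isUnit_iff_isUnit_det _).mp hC
  have hnu : nu = nu * lam⁻¹ * lam :=
    (nonsing_inv_mul_cancel_right _ _ ((isUnit_iff_isUnit_det lam).mp hlam)).symm
  calc nu * lam⁻¹ + lam⁻¹ᵀ * (1 + A * lam⁻¹ * mu)⁻¹ * A * lam⁻¹
      = nu * lam⁻¹ + lam⁻¹ᵀ * A * (lam + mu * A)⁻¹ := by
        rw [Matrix.mul_assoc _ _ A, Matrix.mul_assoc _ (_ * A),
          inv_one_add_mul_inv_mul_mul_mul_inv hlam hC, Matrix.mul_assoc]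
    _ = (nu * lam⁻¹ * (lam + mu * A) + lam⁻¹ᵀ * A) * (lam + mu * A)⁻¹ := by
        rw [Matrix.add_mul, mul_nonsing_inv_cancel_right _ _ hCdet]
    _ = (rho * A + nu) * (lam + mu * A)⁻¹ := by
        congr 1
        rw [hrho, Matrix.mul_add, ← hnu]
        noncomm_ring

end CommRing

theorem star_sumElim_dotProduct_fromBlocks_one_neg_one_mulVec {m R : Type*} [Fintype m]
    [DecidableEq m] [Ring R] [Star R] (x y : m → R) :
    star (Sum.elim x y) ⬝ᵥ (fromBlocks (1 : Matrix m m R) 0 0 (-1) *ᵥ Sum.elim x y) =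
      star x ⬝ᵥ x - star y ⬝ᵥ y := by
  simp [Function.star_sumElim, fromBlocks_mulVec, sumElim_dotProduct_sumElim, neg_mulVec,
    sub_eq_add_neg]

section StarOrdered

variable {m R : Type*} [Fintype m] [DecidableEq m] [PartialOrder R]

theorem mulVec_add_mulVec_ne_zero_of_preserves_kPositive [Ring R] [StarRing R]
    [StarOrderedRing R] {lam mu nu rho : Matrix m m R}
    (hpos : ∀ v : m ⊕ m → R,
      0 < star v ⬝ᵥ (fromBlocks (1 : Matrix m m R) 0 0 (-1) *ᵥ v) →
      0 < star (fromBlocks lam mu nu rho *ᵥ v) ⬝ᵥ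
        (fromBlocks (1 : Matrix m m R) 0 0 (-1) *ᵥ (fromBlocks lam mu nu rho *ᵥ v)))
    {x y : m → R} (hxy : star y ⬝ᵥ y < star x ⬝ᵥ x) : lam *ᵥ x + mu *ᵥ y ≠ 0 := by
  intro hzero
  have hS := hpos (Sum.elim x y) <| by
    rwa [star_sumElim_dotProduct_fromBlocks_one_neg_one_mulVec, sub_pos]
  rw [fromBlocks_mulVec, Sum.elim_comp_inl, Sum.elim_comp_inr, hzero,
    star_sumElim_dotProduct_fromBlocks_one_neg_one_mulVec, star_zero, zero_dotProduct,
    zero_sub, neg_pos] at hS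
  exact (dotProduct_star_self_nonneg _).not_gt hS

theorem dotProduct_star_mulVec_lt_of_posDef_one_sub [CommRing R] [StarRing R]
    [StarOrderedRing R] {A : Matrix m m R}
    (hA : (1 - Aᴴ * A).PosDef) {v : m → R} (hv : v ≠ 0) :
    star (A *ᵥ v) ⬝ᵥ (A *ᵥ v) < star v ⬝ᵥ v := by
  have := hA.dotProduct_mulVec_pos hv
  rwa [sub_mulVec, one_mulVec, dotProduct_sub, sub_pos, ← mulVec_mulVec, dotProduct_mulVec,
    ← star_mulVec] at this

end StarOrdered

theorem isUnit_of_forall_mulVec_ne_zero {m K : Type*} [Fintype m] [DecidableEq m] [Field K]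
    {M : Matrix m m K} (h : ∀ v, v ≠ 0 → M *ᵥ v ≠ 0) : IsUnit M := by
  rw [isUnit_iff_isUnit_det, isUnit_iff_ne_zero, Ne, ← exists_mulVec_eq_zero_iff]
  exact fun ⟨v, hv, hMv⟩ => h v hv hMv

end Matrix

theorem semigroup_action_on_squeezed_states_formula_general (n : ℕ)
    (A lam mu nu rho : Matrix (Fin n) (Fin n) ℂ)
    (hS : (fromBlocks lam mu nu rho)ᵀ *
        fromBlocks (0 : Matrix (Fin n) (Fin n) ℂ) (1 : Matrix (Fin n) (Fin n) ℂ)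
          (-1 : Matrix (Fin n) (Fin n) ℂ) (0 : Matrix (Fin n) (Fin n) ℂ) *
        fromBlocks lam mu nu rho =
      fromBlocks (0 : Matrix (Fin n) (Fin n) ℂ) (1 : Matrix (Fin n) (Fin n) ℂ)
        (-1 : Matrix (Fin n) (Fin n) ℂ) (0 : Matrix (Fin n) (Fin n) ℂ))
    (hpos : ∀ v : (Fin n ⊕ Fin n) → ℂ,
      0 < star v ⬝ᵥ ((fromBlocks (1 : Matrix (Fin n) (Fin n) ℂ) 0 0
          (-1 : Matrix (Fin n) (Fin n) ℂ)) *ᵥ v) →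
      0 < star ((fromBlocks lam mu nu rho) *ᵥ v) ⬝ᵥ
        ((fromBlocks (1 : Matrix (Fin n) (Fin n) ℂ) 0 0
          (-1 : Matrix (Fin n) (Fin n) ℂ)) *ᵥ ((fromBlocks lam mu nu rho) *ᵥ v)))
    (hApd : ((1 : Matrix (Fin n) (Fin n) ℂ) - Aᴴ * A).PosDef) :
    IsUnit lam ∧
    IsUnit (lam + mu * A) ∧
    IsUnit ((1 : Matrix (Fin n) (Fin n) ℂ) + A * lam⁻¹ * mu) ∧
    nu * lam⁻¹ + (lam⁻¹)ᵀ * ((1 : Matrix (Fin n) (Fin n) ℂ) + A * lam⁻¹ * mu)⁻¹ * A * lam⁻¹ =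
      (rho * A + nu) * (lam + mu * A)⁻¹ := by
  have hlam : IsUnit lam := isUnit_of_forall_mulVec_ne_zero fun v hv => by
    simpa using
      mulVec_add_mulVec_ne_zero_of_preserves_kPositive hpos (y := 0) (by simpa using hv)
  have hC : IsUnit (lam + mu * A) := isUnit_of_forall_mulVec_ne_zero fun v hv => by
    rw [add_mulVec, ← mulVec_mulVec]
    exact mulVec_add_mulVec_ne_zero_of_preserves_kPositive hpos
      (dotProduct_star_mulVec_lt_of_posDef_one_sub hApd hv)
  obtain ⟨h₁, h₂⟩ := transpose_mul_relations_of_symplectic_fromBlocks hS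
  exact ⟨hlam, hC, isUnit_one_add_mul_inv_mul hlam hC,
    mul_inv_add_inv_transpose_mul_eq hlam hC (eq_mul_inv_mul_add_inv_transpose hlam h₁ h₂)⟩

/-- If `S = [[λ, μ], [ν, ρ]]` is complex symplectic mapping `K`-positive
vectors to `K`-positive vectors and `A` is complex symmetric with `I − AᴴA` positive
definite, then `λ`, `λ + μA`, and `I + Aλ⁻¹μ` are invertible and
`νλ⁻¹ + (λ⁻¹)ᵀ(I + Aλ⁻¹μ)⁻¹Aλ⁻¹ = (ρA + ν)(λ + μA)⁻¹`. -/
theorem semigroup_action_on_squeezed_states_formula (n : ℕ) (hn : 0 < n)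
    (A lam mu nu rho : Matrix (Fin n) (Fin n) ℂ)
    (hS : (fromBlocks lam mu nu rho)ᵀ *
        fromBlocks (0 : Matrix (Fin n) (Fin n) ℂ) (1 : Matrix (Fin n) (Fin n) ℂ)
          (-1 : Matrix (Fin n) (Fin n) ℂ) (0 : Matrix (Fin n) (Fin n) ℂ) *
        fromBlocks lam mu nu rho =
      fromBlocks (0 : Matrix (Fin n) (Fin n) ℂ) (1 : Matrix (Fin n) (Fin n) ℂ)
        (-1 : Matrix (Fin n) (Fin n) ℂ) (0 : Matrix (Fin n) (Fin n) ℂ))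
    (hpos : ∀ v : (Fin n ⊕ Fin n) → ℂ,
      0 < star v ⬝ᵥ ((fromBlocks (1 : Matrix (Fin n) (Fin n) ℂ) 0 0
          (-1 : Matrix (Fin n) (Fin n) ℂ)) *ᵥ v) →
      0 < star ((fromBlocks lam mu nu rho) *ᵥ v) ⬝ᵥ
        ((fromBlocks (1 : Matrix (Fin n) (Fin n) ℂ) 0 0
          (-1 : Matrix (Fin n) (Fin n) ℂ)) *ᵥ ((fromBlocks lam mu nu rho) *ᵥ v)))
    (hA : Aᵀ = A) (hApd : ((1 : Matrix (Fin n) (Fin n) ℂ) - Aᴴ * A).PosDef) :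
    IsUnit lam ∧
    IsUnit (lam + mu * A) ∧
    IsUnit ((1 : Matrix (Fin n) (Fin n) ℂ) + A * lam⁻¹ * mu) ∧
    nu * lam⁻¹ + (lam⁻¹)ᵀ * ((1 : Matrix (Fin n) (Fin n) ℂ) + A * lam⁻¹ * mu)⁻¹ * A * lam⁻¹ =
      (rho * A + nu) * (lam + mu * A)⁻¹ :=
  semigroup_action_on_squeezed_states_formula_general n A lam mu nu rho hS hpos hApd
end
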